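/- Let L ≥ 3 and p, q ≥ 0. Fix a horizontal edge e₀ of the hexagonal torus T_L, and let N be a nonempty set of perfect matchings of T_L that is closed under single-bead up-jumps, down-jumps and under the vertical translation τ. Let N̂ = {σ ∈ N : σ has a bead at e₀}, assumed nonempty, and let 𝓛̂ be the generator of the process viewed from the tagged bead at e₀. Then the uniform probability measure π̂ on N̂ is stationary for 𝓛̂: for every σ ∈ N̂, Σ_{σ' ∈ N̂} π̂(σ')·𝓛̂(σ',σ) = 0. -/

import Mathlib

/-!
Dimer coverings (perfect matchings) of the hexagonal torus `T_L`, beads, elementary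
moves, and the sets `I⁺_b`, `I⁻_b` of positions available above/below a bead.

Statement-specific material follows the common setup below.

-/

namespace HexDimer

variable (L : ℕ)

/-- Positions `x ∈ (ℤ/Lℤ)²` indexing the white vertices `w_x`, the black vertices `b_x`,
and the horizontal edges (hence the faces / possible bead positions). -/
abbrev Pos := ZMod L × ZMod L

/-- An edge of the hexagonal torus is encoded by its white endpoint `x` together with a
direction `d : Fin 3`: `d = 0` is the horizontal edge `{w_x, b_x}`, `d = 1` is
`{w_x, b_{x+(1,0)}}`, `d = 2` is `{w_x, b_{x+(0,1)}}`. -/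
abbrev Edge := Pos L × Fin 3

/-- The displacement of the black endpoint of an edge in direction `d`. -/
def dvec : Fin 3 → Pos L := ![(0, 0), (1, 0), (0, 1)]

/-- A configuration: a (finite) set of edges. -/
abbrev Config := Finset (Edge L)

/-- `σ` is a perfect matching of the hexagonal torus: every white vertex `w_x` and every
black vertex `b_x` belongs to exactly one edge of `σ`. -/
def IsPM (σ : Config L) : Prop :=
  (∀ x : Pos L, ∃! d : Fin 3, (x, d) ∈ σ) ∧
  (∀ x : Pos L, ∃! e : Edge L, e ∈ σ ∧ e.1 + dvec L e.2 = x)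

/-- The upward shift `(1,-1)` along a column. -/
def u : Pos L := (1, -1)

/-- The set of beads (horizontal dimers) of `σ`, recorded by their positions. -/
def beadPos (σ : Config L) : Finset (Pos L) :=
  (σ.filter (fun e => e.2 = 0)).image Prod.fst

/-- The alternating triple of edges of the face `F_x` containing the lower horizontal
edge `{w_x, b_x}`: the edges `(x,0)`, `(x+(1,-1),2)` and `(x-(0,1),1)`. -/
def lowTriple (x : Pos L) : Finset (Edge L) :=
  {(x, 0), (x + u L, 2), (x - (0, 1), 1)}

/-- The alternating triple of edges of the face `F_x` containing the upper horizontal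
edge `{w_{x+(1,-1)}, b_{x+(1,-1)}}`: the edges `(x,1)`, `(x+(1,-1),0)` and `(x-(0,1),2)`. -/
def highTriple (x : Pos L) : Finset (Edge L) :=
  {(x, 1), (x + u L, 0), (x - (0, 1), 2)}

/-- The elementary up-move at the face `F_x` is allowed: `σ` contains the alternating
triple through the lower horizontal edge of `F_x` (in particular there is a bead at `x`). -/
def CanUp (σ : Config L) (x : Pos L) : Prop := lowTriple L x ⊆ σ

/-- The configuration after the elementary up-move at `F_x`: the three dimers of the low
triple are rotated onto the high triple; the bead at `x` moves up to `x + (1,-1)`. -/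
def upMove (σ : Config L) (x : Pos L) : Config L := (σ \ lowTriple L x) ∪ highTriple L x

/-- The elementary down-move bringing the bead at `x` down to `x - (1,-1)` is allowed. -/
def CanDown (σ : Config L) (x : Pos L) : Prop := highTriple L (x - u L) ⊆ σ

/-- The configuration after the elementary down-move of the bead at `x`. -/
def downMove (σ : Config L) (x : Pos L) : Config L :=
  (σ \ highTriple L (x - u L)) ∪ lowTriple L (x - u L)

/-- `UpPath σ x y σ'` holds if, starting from `σ` with a bead at `x`, a concatenation of
elementary up-moves (each moving this bead and no other bead) brings the bead to
position `y`, the configuration becoming `σ'`. -/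
inductive UpPath : Config L → Pos L → Pos L → Config L → Prop
  | refl (σ : Config L) (x : Pos L) : UpPath σ x x σ
  | step {σ : Config L} {x y : Pos L} {σ' : Config L} :
      CanUp L σ x → UpPath (upMove L σ x) (x + u L) y σ' → UpPath σ x y σ'

/-- `DownPath σ x y σ'`: a concatenation of elementary down-moves of a single bead brings
it from `x` to `y`, the configuration becoming `σ'`. -/
inductive DownPath : Config L → Pos L → Pos L → Config L → Prop
  | refl (σ : Config L) (x : Pos L) : DownPath σ x x σ
  | step {σ : Config L} {x y : Pos L} {σ' : Config L} :
      CanDown L σ x → DownPath (downMove L σ x) (x - u L) y σ' → DownPath σ x y σ'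

/-- `I⁺_b(σ)`: the set of positions available above the bead at `x`. -/
def Iplus (σ : Config L) (x : Pos L) : Set (Pos L) :=
  {y | y ≠ x ∧ ∃ σ' : Config L, UpPath L σ x y σ'}

/-- `I⁻_b(σ)`: the set of positions available below the bead at `x`. -/
def Iminus (σ : Config L) (x : Pos L) : Set (Pos L) :=
  {y | y ≠ x ∧ ∃ σ' : Config L, DownPath L σ x y σ'}


/-- `UpPathN σ x n σ'`: a concatenation of `n` elementary up-moves (each moving the same
bead and no other bead) brings the bead from `x` to `x + n·(1,-1)`, the configuration
becoming `σ'`. -/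
inductive UpPathN : Config L → Pos L → ℕ → Config L → Prop
  | refl (σ : Config L) (x : Pos L) : UpPathN σ x 0 σ
  | step {σ : Config L} {x : Pos L} {n : ℕ} {σ' : Config L} :
      CanUp L σ x → UpPathN (upMove L σ x) (x + u L) n σ' → UpPathN σ x (n + 1) σ'

/-- `DownPathN σ x n σ'`: `n` elementary down-moves of a single bead starting at `x`. -/
inductive DownPathN : Config L → Pos L → ℕ → Config L → Prop
  | refl (σ : Config L) (x : Pos L) : DownPathN σ x 0 σ
  | step {σ : Config L} {x : Pos L} {n : ℕ} {σ' : Config L} :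
      CanDown L σ x → DownPathN (downMove L σ x) (x - u L) n σ' → DownPathN σ x (n + 1) σ'

/-- The vertical translation `τ^k` (`k ∈ ℤ`): every edge is translated by `k·(1,-1)`. -/
def tshift (k : ℤ) (σ : Config L) : Config L :=
  σ.image (fun e => (e.1 + k • u L, e.2))

/-- Number of up-transitions of the tagged-bead process from `σ` producing `τ`, the
tagged bead sitting at the horizontal edge `x₀`.  A bead other than the tagged one
up-jumps and the configuration is unchanged otherwise; if the tagged bead up-jumps `n`
steps, the resulting matching is translated back by `τ^{-n}`. -/
noncomputable def numUpHat (x₀ : Pos L) (σ τ : Config L) : ℕ :=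
  Set.ncard {pr : Pos L × Pos L | pr.2 ≠ pr.1 ∧
    ((pr.1 ≠ x₀ ∧ ∃ n : ℕ, pr.2 = pr.1 + n • u L ∧ UpPathN L σ pr.1 n τ) ∨
     (pr.1 = x₀ ∧ ∃ n : ℕ, 0 < n ∧ pr.2 = x₀ + n • u L ∧
        ∃ σ' : Config L, UpPathN L σ x₀ n σ' ∧ τ = tshift L (-(n : ℤ)) σ'))}

/-- Number of down-transitions of the tagged-bead process from `σ` producing `τ`. -/
noncomputable def numDownHat (x₀ : Pos L) (σ τ : Config L) : ℕ :=
  Set.ncard {pr : Pos L × Pos L | pr.2 ≠ pr.1 ∧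
    ((pr.1 ≠ x₀ ∧ ∃ n : ℕ, pr.2 = pr.1 - n • u L ∧ DownPathN L σ pr.1 n τ) ∨
     (pr.1 = x₀ ∧ ∃ n : ℕ, 0 < n ∧ pr.2 = x₀ - n • u L ∧
        ∃ σ' : Config L, DownPathN L σ x₀ n σ' ∧ τ = tshift L (n : ℤ) σ'))}

/-- The generator `𝓛̂` of the process viewed from the tagged bead at `x₀`:
off-diagonal entries are `p·#{up-transitions} + q·#{down-transitions}`, and the diagonal
entry is minus the sum of the off-diagonal entries of its row. -/
noncomputable def HatGen [NeZero L] (x₀ : Pos L) (p q : ℝ) (σ τ : Config L) : ℝ :=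
  if τ = σ then
    -∑ τ' ∈ Finset.univ.erase σ, (p * numUpHat L x₀ σ τ' + q * numDownHat L x₀ σ τ')
  else p * numUpHat L x₀ σ τ + q * numDownHat L x₀ σ τ

/-- `τ` is obtained from `σ` by a single-bead up-jump. -/
def IsUpJump (σ τ : Config L) : Prop :=
  ∃ x y : Pos L, y ≠ x ∧ UpPath L σ x y τ

/-- `τ` is obtained from `σ` by a single-bead down-jump. -/
def IsDownJump (σ τ : Config L) : Prop :=
  ∃ x y : Pos L, y ≠ x ∧ DownPath L σ x y τ

variable {L}

/-!
Stationarity of the uniform measure means that at every `σ ∈ N̂` the total rate into `σ`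
equals the total rate out of `σ`. Each available up-jump (down-jump) of a bead of `σ` gives one
transition out of `σ`, never back to `σ`. Reversing a jump (and undoing the recentering `τ^{∓n}`
when the tagged bead moves) matches the up-transitions into `σ` with the down-jumps available in
`σ`, and vice versa; closure of `N` puts their sources in `N̂`. Both balances thus reduce to:
`σ` has as many up-jumps as down-jumps.

An up-jump is determined by its target, an *up-gate*, and each gate is the target of the jump
of the first bead below it (every column carries a bead, since all columns carry equally many).
For a perfect matching the gates are the `y` with `(y - (1,0), 1) ∈ σ`, `(y, 1) ∉ σ`, while the
gates of the reflected matching correspond to the `y` with `(y, 1) ∈ σ`, `(y - (1,0), 1) ∉ σ`: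
two sets of equal size. The point reflection `w_x ↔ b_{-x}` exchanges up- and down-moves, and
turns every statement about up-jumps into the one about down-jumps.
-/

section Positions

lemma natCast_inj_of_lt {j k : ℕ} (hj : j < L) (hk : k < L) (h : (j : ZMod L) = k) : j = k := by
  have : NeZero L := ⟨by omega⟩
  rwa [ZMod.natCast_eq_natCast_iff', Nat.mod_eq_of_lt hj, Nat.mod_eq_of_lt hk] at h

lemma natCast_ne_zero_of_lt {k : ℕ} (h1 : 1 ≤ k) (hk : k < L) : (k : ZMod L) ≠ 0 := fun h =>
  absurd (natCast_inj_of_lt (k := 0) hk (by omega) (by simpa using h)) (by omega)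

lemma natCast_ne_one_of_lt {k : ℕ} (h2 : 2 ≤ k) (hk : k < L) : (k : ZMod L) ≠ 1 := fun h =>
  absurd (natCast_inj_of_lt (k := 1) hk (by omega) (by simpa using h)) (by omega)

lemma nsmul_u (n : ℕ) : n • u L = ((n : ZMod L), -(n : ZMod L)) := by
  simp [u]

lemma nsmul_u_inj {m n : ℕ} (hm : m < L) (hn : n < L) (h : m • u L = n • u L) : m = n := by
  rw [nsmul_u, nsmul_u, Prod.ext_iff] at h
  exact natCast_inj_of_lt hm hn h.1

lemma nsmul_u_ne_zero {n : ℕ} (h1 : 1 ≤ n) (hn : n < L) : n • u L ≠ 0 := fun h =>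
  absurd (nsmul_u_inj hn (by omega) (h.trans (zero_nsmul _).symm)) (by omega)

lemma card_nsmul_u : L • u L = 0 := by
  rw [nsmul_u]
  simp

lemma add_nsmul_u_succ (x : Pos L) (n : ℕ) : x + u L + n • u L = x + (n + 1) • u L := by
  rw [succ_nsmul]
  abel

lemma sub_nsmul_u_succ (x : Pos L) (n : ℕ) : x - u L - n • u L = x - (n + 1) • u L := by
  rw [succ_nsmul]
  abel

lemma add_u_sub_one_zero (x : Pos L) : x + u L - (1, 0) = x - (0, 1) := by
  rw [u, Prod.ext_iff]
  constructor <;> simp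
  ring

variable [Fact (1 < L)]

lemma add_u_ne_self (x : Pos L) : x + u L ≠ x := by
  rw [u, Ne, Prod.ext_iff]
  simp

lemma sub_zero_one_ne_self (x : Pos L) : x - (0, 1) ≠ x := by
  rw [Ne, Prod.ext_iff]
  simp

lemma add_u_ne_sub_zero_one (x : Pos L) : x + u L ≠ x - (0, 1) := by
  rw [u, Ne, Prod.ext_iff]
  simp [sub_eq_add_neg]

end Positions

section Moves

variable {σ : Config L} {x z : Pos L} {d : Fin 3}

lemma mem_lowTriple {e : Edge L} :
    e ∈ lowTriple L x ↔ e = (x, 0) ∨ e = (x + u L, 2) ∨ e = (x - (0, 1), 1) := by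
  simp [lowTriple]

lemma mem_highTriple {e : Edge L} :
    e ∈ highTriple L x ↔ e = (x, 1) ∨ e = (x + u L, 0) ∨ e = (x - (0, 1), 2) := by
  simp [highTriple]

lemma mem_upMove {e : Edge L} :
    e ∈ upMove L σ x ↔ (e ∈ σ ∧ e ∉ lowTriple L x) ∨ e ∈ highTriple L x := by
  simp [upMove]

lemma canUp_iff : CanUp L σ x ↔ (x, 0) ∈ σ ∧ (x + u L, 2) ∈ σ ∧ (x - (0, 1), 1) ∈ σ := by
  simp [CanUp, lowTriple, Finset.insert_subset_iff]

lemma CanUp.bead (h : CanUp L σ x) : (x, 0) ∈ σ := (canUp_iff.mp h).1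

lemma mem_upMove_of_ne (h0 : z ≠ x) (h1 : z ≠ x + u L) (h2 : z ≠ x - (0, 1)) :
    (z, d) ∈ upMove L σ x ↔ (z, d) ∈ σ := by
  simp [mem_upMove, mem_lowTriple, mem_highTriple, h0, h1, h2]

lemma bead_mem_upMove (hz : z ≠ x) (h : (z, 0) ∈ σ) : (z, 0) ∈ upMove L σ x := by
  simp [mem_upMove, mem_lowTriple, hz, h]

lemma bead_mem_upMove_self : (x + u L, 0) ∈ upMove L σ x := by
  simp [mem_upMove, mem_highTriple]

lemma mem_downMove {e : Edge L} :
    e ∈ downMove L σ x ↔ (e ∈ σ ∧ e ∉ highTriple L (x - u L)) ∨ e ∈ lowTriple L (x - u L) := by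
  simp [downMove]

lemma canDown_upMove : CanDown L (upMove L σ x) (x + u L) := by
  intro e he
  rw [add_sub_cancel_right] at he
  exact mem_upMove.mpr (Or.inr he)

end Moves

def IsWhitePM (σ : Config L) : Prop := ∀ x : Pos L, ∃! d : Fin 3, (x, d) ∈ σ

section WhitePM

variable {σ : Config L} {x z : Pos L} {d d' : Fin 3}

lemma IsPM.isWhitePM (h : IsPM L σ) : IsWhitePM σ := h.1

lemma IsWhitePM.eq (h : IsWhitePM σ) (hd : (z, d) ∈ σ) (hd' : (z, d') ∈ σ) : d = d' :=
  (h z).unique hd hd'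

lemma IsWhitePM.not_mem (h : IsWhitePM σ) (hd : (z, d) ∈ σ) (hne : d' ≠ d) : (z, d') ∉ σ :=
  fun hd' => hne (h.eq hd' hd)

lemma highTriple_disjoint (hσ : IsWhitePM σ) (h : CanUp L σ x) :
    ∀ e ∈ highTriple L x, e ∉ σ := by
  obtain ⟨h0, h2, h1⟩ := canUp_iff.mp h
  intro e he
  rcases mem_highTriple.mp he with rfl | rfl | rfl
  · exact hσ.not_mem h0 (by decide)
  · exact hσ.not_mem h2 (by decide)
  · exact hσ.not_mem h1 (by decide)

lemma downMove_upMove (hσ : IsWhitePM σ) (h : CanUp L σ x) :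
    downMove L (upMove L σ x) (x + u L) = σ := by
  ext e
  rw [mem_downMove, add_sub_cancel_right, mem_upMove]
  by_cases hlow : e ∈ lowTriple L x
  · simp [hlow, h hlow]
  · have := highTriple_disjoint hσ h e
    tauto

variable [Fact (1 < L)]

lemma isWhitePM_upMove (hσ : IsWhitePM σ) (h : CanUp L σ x) : IsWhitePM (upMove L σ x) := by
  have hne := add_u_ne_self x
  have hne' := sub_zero_one_ne_self x
  have hne'' := add_u_ne_sub_zero_one x
  -- at each white of the face, the low-triple edge is the one of `σ`; the high triple adds one
  have key : ∀ {z : Pos L} {d₀ d₁ : Fin 3}, (z, d₀) ∈ lowTriple L x → (z, d₁) ∈ highTriple L x →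
      (∀ d, (z, d) ∈ highTriple L x → d = d₁) → ∃! d, (z, d) ∈ upMove L σ x := by
    intro z d₀ d₁ hlow hhigh huniq
    refine ⟨d₁, mem_upMove.mpr (Or.inr hhigh), fun d hd => ?_⟩
    rcases mem_upMove.mp hd with ⟨hdσ, hnot⟩ | hdhigh
    · exact absurd (hσ.eq hdσ (h hlow) ▸ hlow) hnot
    · exact huniq d hdhigh
  intro z
  by_cases hz : z = x ∨ z = x + u L ∨ z = x - (0, 1)
  · rcases hz with rfl | rfl | rfl
    · exact key (d₀ := 0) (d₁ := 1) (by simp [mem_lowTriple]) (by simp [mem_highTriple])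
        (by simp [mem_highTriple, hne.symm, hne'.symm])
    · exact key (d₀ := 2) (d₁ := 0) (by simp [mem_lowTriple]) (by simp [mem_highTriple])
        (by simp [mem_highTriple, hne, hne''])
    · exact key (d₀ := 1) (d₁ := 2) (by simp [mem_lowTriple]) (by simp [mem_highTriple])
        (by simp [mem_highTriple, hne', hne''.symm])
  · push Not at hz
    obtain ⟨d, hd, huniq⟩ := hσ z
    exact ⟨d, (mem_upMove_of_ne hz.1 hz.2.1 hz.2.2).mpr hd,
      fun d' hd' => huniq d' ((mem_upMove_of_ne hz.1 hz.2.1 hz.2.2).mp hd')⟩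

end WhitePM

/-- `y` can receive a bead moving up from `y - u`: besides that bead, the face below `y`
carries the other two edges of its low triple. -/
def UpGate (σ : Config L) (y : Pos L) : Prop := (y, 2) ∈ σ ∧ (y - (1, 0), 1) ∈ σ

section Gates

variable {σ : Config L} {x : Pos L}

lemma canUp_iff_upGate : CanUp L σ x ↔ (x, 0) ∈ σ ∧ UpGate σ (x + u L) := by
  rw [canUp_iff, UpGate, add_u_sub_one_zero]

lemma UpGate.not_bead (hσ : IsWhitePM σ) {y : Pos L} (hy : UpGate σ y) : (y, 0) ∉ σ :=
  hσ.not_mem hy.1 (by decide)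

lemma upGate_upMove_iff {k : ℕ} (h2 : 2 ≤ k) (hk : k < L) :
    UpGate (upMove L σ x) (x + k • u L) ↔ UpGate σ (x + k • u L) := by
  have h1 : 1 ≤ k := by omega
  unfold UpGate
  rw [mem_upMove_of_ne, mem_upMove_of_ne] <;>
    simp [u, Prod.ext_iff, sub_eq_add_neg, add_assoc, natCast_ne_zero_of_lt h1 hk,
      natCast_ne_one_of_lt h2 hk]

end Gates

section Translation

variable {σ : Config L} {x : Pos L}

lemma mem_tshift {k : ℤ} {z : Pos L} {d : Fin 3} :
    (z, d) ∈ tshift L k σ ↔ (z - k • u L, d) ∈ σ := by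
  simp only [tshift, Finset.mem_image, Prod.mk.injEq]
  constructor
  · rintro ⟨⟨w, d'⟩, hw, rfl, rfl⟩
    simpa using hw
  · exact fun h => ⟨_, h, sub_add_cancel z _, rfl⟩

lemma tshift_tshift (a b : ℤ) (σ : Config L) : tshift L a (tshift L b σ) = tshift L (a + b) σ := by
  ext ⟨z, d⟩
  simp only [mem_tshift, add_zsmul, sub_sub, add_comm (a • u L)]

lemma tshift_zero (σ : Config L) : tshift L 0 σ = σ := by
  ext ⟨z, d⟩
  simp [mem_tshift]

lemma tshift_neg_tshift (k : ℤ) (σ : Config L) : tshift L (-k) (tshift L k σ) = σ := by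
  rw [tshift_tshift, neg_add_cancel, tshift_zero]

lemma tshift_tshift_neg (k : ℤ) (σ : Config L) : tshift L k (tshift L (-k) σ) = σ := by
  simpa using tshift_neg_tshift (-k) σ

lemma mem_lowTriple_add {v z : Pos L} {d : Fin 3} :
    (z, d) ∈ lowTriple L (x + v) ↔ (z - v, d) ∈ lowTriple L x := by
  simp [mem_lowTriple, sub_eq_iff_eq_add, add_right_comm _ v, sub_add_eq_add_sub]

lemma mem_highTriple_add {v z : Pos L} {d : Fin 3} :
    (z, d) ∈ highTriple L (x + v) ↔ (z - v, d) ∈ highTriple L x := by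
  simp [mem_highTriple, sub_eq_iff_eq_add, add_right_comm _ v, sub_add_eq_add_sub]

lemma tshift_upMove (k : ℤ) :
    tshift L k (upMove L σ x) = upMove L (tshift L k σ) (x + k • u L) := by
  ext ⟨z, d⟩
  simp only [mem_tshift, mem_upMove, mem_lowTriple_add, mem_highTriple_add]

lemma CanUp.tshift (h : CanUp L σ x) (k : ℤ) : CanUp L (tshift L k σ) (x + k • u L) := by
  rintro ⟨z, d⟩ hz
  exact mem_tshift.mpr (h (mem_lowTriple_add.mp hz))

end Translation

namespace UpPathN

variable {σ τ : Config L} {x : Pos L} {n : ℕ}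

lemma unique {τ' : Config L} (h : UpPathN L σ x n τ) (h' : UpPathN L σ x n τ') : τ = τ' := by
  induction h with
  | refl => cases h'; rfl
  | step _ _ ih => cases h' with
    | step _ p' => exact ih p'

lemma trans {ρ : Config L} {m : ℕ} (h : UpPathN L σ x n τ) (h' : UpPathN L τ (x + n • u L) m ρ) :
    UpPathN L σ x (n + m) ρ := by
  induction h with
  | refl => simpa using h'
  | step hc _ ih =>
    rw [← add_nsmul_u_succ] at h'
    rw [Nat.add_right_comm]
    exact step hc (ih h')

lemma bead_target (h : UpPathN L σ x n τ) (hx : (x, 0) ∈ σ) : (x + n • u L, 0) ∈ τ := by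
  induction h with
  | refl => simpa using hx
  | step _ _ ih =>
    have := ih bead_mem_upMove_self
    rwa [add_nsmul_u_succ] at this

lemma bead (h : UpPathN L σ x n τ) (hn : 0 < n) : (x, 0) ∈ σ := by
  cases h with
  | refl => omega
  | step hc _ => exact hc.bead

lemma bead_mem_of_forall_ne {z : Pos L} (h : UpPathN L σ x n τ) (hne : ∀ j < n, x + j • u L ≠ z)
    (hz : (z, 0) ∈ σ) : (z, 0) ∈ τ := by
  induction h with
  | refl => exact hz
  | step _ _ ih =>
    refine ih (fun j hj => ?_) (bead_mem_upMove (by simpa using (hne 0 (by omega)).symm) hz)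
    rw [add_nsmul_u_succ]
    exact hne (j + 1) (by omega)

lemma toUpPath (h : UpPathN L σ x n τ) : UpPath L σ x (x + n • u L) τ := by
  induction h with
  | refl => simpa using UpPath.refl _ _
  | step hc _ ih => exact UpPath.step hc (by rwa [add_nsmul_u_succ] at ih)

lemma isUpJump (h : UpPathN L σ x n τ) (h1 : 1 ≤ n) (hn : n < L) : IsUpJump L σ τ :=
  ⟨x, x + n • u L, fun h' => nsmul_u_ne_zero h1 hn (by simpa using h'), h.toUpPath⟩

lemma tshift (h : UpPathN L σ x n τ) (k : ℤ) :
    UpPathN L (HexDimer.tshift L k σ) (x + k • u L) n (HexDimer.tshift L k τ) := by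
  induction h with
  | refl => exact refl _ _
  | step hc _ ih =>
    refine step (hc.tshift k) ?_
    rwa [← tshift_upMove, add_right_comm]

variable [Fact (1 < L)]

lemma isWhitePM (h : UpPathN L σ x n τ) (hσ : IsWhitePM σ) : IsWhitePM τ := by
  induction h with
  | refl => exact hσ
  | step hc _ ih => exact ih (isWhitePM_upMove hσ hc)

lemma upGate (h : UpPathN L σ x n τ) (hσ : IsWhitePM σ) :
    ∀ k, 1 ≤ k → k ≤ n → UpGate σ (x + k • u L) := by
  induction h with
  | refl => intro k hk hk'; omega
  | @step σ x n τ hc _ ih =>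
    intro k hk hk'
    have hσ' := isWhitePM_upMove hσ hc
    have ih := ih hσ'
    -- a gate at `x + L • u = x` would clash with the edge `(x, 1)` created by the move
    have hn : n + 1 < L := by
      have hL : 1 < L := Fact.out
      by_contra! hL'
      have hgate := ih (L - 1) (by omega) (by omega)
      rw [add_nsmul_u_succ, Nat.sub_add_cancel (by omega), card_nsmul_u, add_zero] at hgate
      exact hσ'.not_mem (d' := 1) hgate.1 (by decide) (by simp [mem_upMove, mem_highTriple])
    rcases Nat.lt_or_ge k 2 with hk2 | hk2
    · obtain rfl : k = 1 := by omega
      simpa using (canUp_iff_upGate.mp hc).2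
    · have hgate := ih (k - 1) (by omega) (by omega)
      rw [add_nsmul_u_succ, Nat.sub_add_cancel (by omega)] at hgate
      exact (upGate_upMove_iff hk2 (by omega)).mp hgate

lemma length_lt (h : UpPathN L σ x n τ) (hσ : IsWhitePM σ) : n < L := by
  have hL : 1 < L := Fact.out
  by_contra! hn
  have hgate := h.upGate hσ L (by omega) hn
  rw [card_nsmul_u, add_zero] at hgate
  exact hgate.not_bead hσ (h.bead (by omega))

lemma bead_mem_of_ne {z : Pos L} (h : UpPathN L σ x n τ) (hσ : IsWhitePM σ) (hz : (z, 0) ∈ σ)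
    (hzx : z ≠ x) : (z, 0) ∈ τ := by
  refine h.bead_mem_of_forall_ne (fun j hj => ?_) hz
  rcases Nat.eq_zero_or_pos j with rfl | hj0
  · simpa using hzx.symm
  · rintro rfl
    exact (h.upGate hσ j hj0 hj.le).not_bead hσ hz

lemma target_ne_bead {z : Pos L} (h : UpPathN L σ x n τ) (hσ : IsWhitePM σ) (hn : 0 < n)
    (hz : (z, 0) ∈ σ) : x + n • u L ≠ z := by
  rintro rfl
  exact (h.upGate hσ n hn le_rfl).not_bead hσ hz

lemma ne_self (h : UpPathN L σ x n τ) (hσ : IsWhitePM σ) (hn : 0 < n) : τ ≠ σ := by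
  rintro rfl
  exact h.target_ne_bead hσ hn (h.bead_target (h.bead hn)) rfl

/-- Since `n • u` has order dividing `L`, iterating such a path `L` times would give a path of
length `L * n ≥ L`. -/
lemma ne_tshift (h : UpPathN L σ x n τ) (hσ : IsWhitePM σ) (hn : 0 < n) :
    τ ≠ HexDimer.tshift L n σ := by
  rintro rfl
  have iter : ∀ m : ℕ, UpPathN L σ x (m * n) (HexDimer.tshift L (m * n : ℕ) σ) := by
    intro m
    induction m with
    | zero => simpa [tshift_zero] using refl σ x
    | succ m ih =>
      have hstep := h.tshift (m * n : ℕ)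
      rw [tshift_tshift, natCast_zsmul] at hstep
      convert ih.trans hstep using 2 <;> push_cast <;> ring
  have := (iter L).length_lt hσ
  nlinarith

end UpPathN

namespace DownPathN

variable {σ τ : Config L} {x : Pos L} {n : ℕ}

lemma snoc (h : DownPathN L σ x n τ) (hc : CanDown L τ (x - n • u L)) :
    DownPathN L σ x (n + 1) (downMove L τ (x - n • u L)) := by
  induction h with
  | refl => simpa using step hc (refl _ _)
  | step hc' _ ih =>
    rw [← sub_nsmul_u_succ] at hc ⊢
    exact step hc' (ih hc)

end DownPathN

lemma UpPathN.reverse [Fact (1 < L)] {σ τ : Config L} {x : Pos L} {n : ℕ}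
    (h : UpPathN L σ x n τ) (hσ : IsWhitePM σ) : DownPathN L τ (x + n • u L) n σ := by
  induction h with
  | refl => simpa using DownPathN.refl _ _
  | step hc _ ih =>
    have hsnoc := (ih (isWhitePM_upMove hσ hc)).snoc (by simpa using canDown_upMove)
    rwa [add_sub_cancel_right, downMove_upMove hσ hc, add_nsmul_u_succ] at hsnoc

lemma exists_upPathN [Fact (1 < L)] {σ : Config L} {x : Pos L} {n : ℕ} (hσ : IsWhitePM σ)
    (hx : (x, 0) ∈ σ) (hgate : ∀ k, 1 ≤ k → k ≤ n → UpGate σ (x + k • u L)) :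
    ∃ τ, UpPathN L σ x n τ := by
  induction n generalizing σ x with
  | zero => exact ⟨σ, .refl σ x⟩
  | succ n ih =>
    have hn : n + 1 < L := by
      by_contra! hL
      have hL' : 1 < L := Fact.out
      have := hgate L (by omega) hL
      rw [card_nsmul_u, add_zero] at this
      exact this.not_bead hσ hx
    have hc : CanUp L σ x := canUp_iff_upGate.mpr ⟨hx, by simpa using hgate 1 le_rfl (by omega)⟩
    obtain ⟨τ, hτ⟩ := ih (isWhitePM_upMove hσ hc) bead_mem_upMove_self fun k hk hk' => by
      rw [add_nsmul_u_succ]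
      exact (upGate_upMove_iff (by omega) (by omega)).mpr (hgate (k + 1) (by omega) (by omega))
    exact ⟨τ, .step hc hτ⟩

/-- The point reflection `w_x ↔ b_{-x}` of the torus, on edges. It maps low triples to high
triples, hence exchanges up-moves and down-moves. -/
def reflectEdge (e : Edge L) : Edge L := (-e.1 - dvec L e.2, e.2)

lemma reflectEdge_involutive : Function.Involutive (reflectEdge (L := L)) := by
  rintro ⟨x, d⟩
  simp [reflectEdge]

def reflect (σ : Config L) : Config L := σ.map (reflectEdge_involutive.toPerm _).toEmbedding

section Reflection

variable {σ : Config L} {x : Pos L}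

lemma mem_reflect {e : Edge L} : e ∈ reflect σ ↔ reflectEdge e ∈ σ := by
  simp [reflect, Finset.mem_map_equiv]

lemma reflect_reflect (σ : Config L) : reflect (reflect σ) = σ := by
  ext e
  rw [mem_reflect, mem_reflect, reflectEdge_involutive]

lemma reflect_injective : Function.Injective (reflect (L := L)) :=
  Function.LeftInverse.injective reflect_reflect

lemma bead_mem_reflect : (x, 0) ∈ reflect σ ↔ (-x, 0) ∈ σ := by
  simp [mem_reflect, reflectEdge, dvec, Prod.mk_zero_zero]

lemma reflectEdge_mem_lowTriple {e : Edge L} :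
    reflectEdge e ∈ lowTriple L x ↔ e ∈ highTriple L (-x - u L) := by
  obtain ⟨z, d⟩ := e
  fin_cases d <;> simp [reflectEdge, highTriple, lowTriple, dvec, u, Prod.ext_iff] <;> grind

lemma reflectEdge_mem_highTriple {e : Edge L} :
    reflectEdge e ∈ highTriple L x ↔ e ∈ lowTriple L (-x - u L) := by
  obtain ⟨z, d⟩ := e
  fin_cases d <;> simp [reflectEdge, highTriple, lowTriple, dvec, u, Prod.ext_iff] <;> grind

lemma canUp_reflect : CanUp L (reflect σ) x ↔ CanDown L σ (-x) := by
  simp only [CanUp, CanDown, Finset.subset_iff, mem_reflect]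
  constructor
  · intro h e he
    simpa [reflectEdge_involutive e] using h (reflectEdge_mem_lowTriple.mpr he)
  · exact fun h e he => h (reflectEdge_mem_lowTriple.mp (by rwa [reflectEdge_involutive]))

lemma canDown_reflect : CanDown L (reflect σ) x ↔ CanUp L σ (-x) := by
  rw [← reflect_reflect σ, canUp_reflect, neg_neg, reflect_reflect]

lemma reflect_upMove : reflect (upMove L σ x) = downMove L (reflect σ) (-x) := by
  ext e
  simp only [mem_reflect, mem_upMove, mem_downMove, reflectEdge_mem_lowTriple,
    reflectEdge_mem_highTriple]

lemma reflect_downMove : reflect (downMove L σ x) = upMove L (reflect σ) (-x) := by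
  rw [← reflect_reflect (upMove L _ _), reflect_upMove, reflect_reflect, neg_neg]

lemma reflect_tshift (k : ℤ) : reflect (tshift L k σ) = tshift L (-k) (reflect σ) := by
  ext ⟨z, d⟩
  simp only [mem_reflect, reflectEdge, mem_tshift, neg_zsmul, sub_neg_eq_add]
  congr! 2
  abel

lemma IsPM.reflect (h : IsPM L σ) : IsPM L (reflect σ) := by
  constructor
  · intro x
    obtain ⟨⟨z, d⟩, ⟨hzd, hsum⟩, huniq⟩ := h.2 (-x)
    refine ⟨d, mem_reflect.mpr ?_, fun d' hd' => ?_⟩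
    · have : -x - dvec L d = z := by rw [← hsum]; exact add_sub_cancel_right z _
      simpa [reflectEdge, this] using hzd
    · refine congrArg Prod.snd (huniq _ ⟨mem_reflect.mp hd', ?_⟩)
      simp [reflectEdge]
  · intro y
    obtain ⟨d, hd, huniq⟩ := h.1 (-y)
    refine ⟨(y - dvec L d, d), ⟨mem_reflect.mpr (by simpa [reflectEdge] using hd), by simp⟩, ?_⟩
    rintro ⟨z, d'⟩ ⟨hz, rfl⟩
    obtain rfl := huniq d' (by rw [neg_add']; exact mem_reflect.mp hz)
    simp

end Reflection

lemma UpPathN.reflect {σ τ : Config L} {x : Pos L} {n : ℕ} (h : UpPathN L σ x n τ) :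
    DownPathN L (reflect σ) (-x) n (reflect τ) := by
  induction h with
  | refl => exact .refl _ _
  | step hc _ ih =>
    refine .step (canDown_reflect.mpr (by rwa [neg_neg])) ?_
    rwa [reflect_upMove, neg_add'] at ih

lemma DownPathN.reflect {σ τ : Config L} {x : Pos L} {n : ℕ} (h : DownPathN L σ x n τ) :
    UpPathN L (reflect σ) (-x) n (reflect τ) := by
  induction h with
  | refl => exact .refl _ _
  | step hc _ ih =>
    refine .step (canUp_reflect.mpr (by rwa [neg_neg])) ?_
    rwa [reflect_downMove, neg_sub, sub_eq_neg_add] at ih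

namespace DownPathN

variable {σ τ : Config L} {x z : Pos L} {n : ℕ}

lemma unique {τ' : Config L} (h : DownPathN L σ x n τ) (h' : DownPathN L σ x n τ') : τ = τ' :=
  reflect_injective (h.reflect.unique h'.reflect)

lemma bead_target (h : DownPathN L σ x n τ) (hx : (x, 0) ∈ σ) : (x - n • u L, 0) ∈ τ := by
  simpa [bead_mem_reflect, neg_add_eq_sub] using h.reflect.bead_target (by simpa [bead_mem_reflect])

lemma toDownPath (h : DownPathN L σ x n τ) : DownPath L σ x (x - n • u L) τ := by
  induction h with
  | refl => simpa using DownPath.refl _ _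
  | step hc _ ih => exact DownPath.step hc (by rwa [sub_nsmul_u_succ] at ih)

lemma isDownJump (h : DownPathN L σ x n τ) (h1 : 1 ≤ n) (hn : n < L) : IsDownJump L σ τ :=
  ⟨x, x - n • u L, fun h' => nsmul_u_ne_zero h1 hn (by simpa using h'), h.toDownPath⟩

variable [Fact (1 < L)]

lemma length_lt (h : DownPathN L σ x n τ) (hσ : IsPM L σ) : n < L :=
  h.reflect.length_lt hσ.reflect.isWhitePM

lemma bead_mem_of_ne (h : DownPathN L σ x n τ) (hσ : IsPM L σ) (hz : (z, 0) ∈ σ) (hzx : z ≠ x) :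
    (z, 0) ∈ τ := by
  simpa [bead_mem_reflect] using
    h.reflect.bead_mem_of_ne hσ.reflect.isWhitePM (z := -z) (by simpa [bead_mem_reflect]) (by simpa)

lemma target_ne_bead (h : DownPathN L σ x n τ) (hσ : IsPM L σ) (hn : 0 < n) (hz : (z, 0) ∈ σ) :
    x - n • u L ≠ z := by
  have := h.reflect.target_ne_bead hσ.reflect.isWhitePM hn (z := -z) (by simpa [bead_mem_reflect])
  contrapose! this
  rw [← this]
  abel

lemma reverse (h : DownPathN L σ x n τ) (hσ : IsPM L σ) : UpPathN L τ (x - n • u L) n σ := by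
  simpa [reflect_reflect, neg_add_eq_sub] using (h.reflect.reverse hσ.reflect.isWhitePM).reflect

end DownPathN

section BlackVertices

variable {σ : Config L}

lemma IsPM.black_eq (h : IsPM L σ) {a b : Pos L} {d d' : Fin 3} (ha : (a, d) ∈ σ)
    (hb : (b, d') ∈ σ) (hab : a + dvec L d = b + dvec L d') : (a, d) = (b, d') :=
  (h.2 _).unique ⟨ha, hab⟩ ⟨hb, rfl⟩

lemma IsPM.black_cases (h : IsPM L σ) (y : Pos L) :
    (y, 0) ∈ σ ∨ (y - (1, 0), 1) ∈ σ ∨ (y - (0, 1), 2) ∈ σ := by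
  obtain ⟨⟨z, d⟩, ⟨hz, rfl⟩, -⟩ := h.2 y
  fin_cases d <;> simp_all [dvec, Prod.mk_zero_zero]

lemma IsPM.upGate_iff (h : IsPM L σ) (y : Pos L) :
    UpGate σ y ↔ (y - (1, 0), 1) ∈ σ ∧ (y, 1) ∉ σ := by
  refine ⟨fun hy => ⟨hy.2, h.isWhitePM.not_mem hy.1 (by decide)⟩, fun ⟨h1, hy1⟩ => ⟨?_, h1⟩⟩
  obtain ⟨d, hd, -⟩ := h.1 y
  fin_cases d
  · exact absurd (h.black_eq hd h1 (by simp [dvec])) (by simp)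
  · exact absurd hd hy1
  · exact hd

lemma IsPM.bead_or_upGate_sub_u (h : IsPM L σ) {y : Pos L} (hy : UpGate σ y) :
    (y - u L, 0) ∈ σ ∨ UpGate σ (y - u L) := by
  obtain ⟨d, hd, -⟩ := h.1 (y - u L)
  fin_cases d
  · exact Or.inl hd
  · refine absurd (h.black_eq hd hy.1 ?_) (by simp)
    simp [dvec, u, Prod.ext_iff]
  · refine Or.inr ⟨hd, ?_⟩
    rcases h.black_cases (y - u L) with h0 | h1 | h2
    · exact absurd (h.isWhitePM.eq hd h0) (by decide)
    · exact h1
    · have hpos : y - u L - (0, 1) = y - (1, 0) := by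
        rw [u, Prod.ext_iff]
        constructor <;> simp
      exact absurd (h.isWhitePM.eq hy.2 (hpos ▸ h2)) (by decide)

end BlackVertices

/-- The column `ℓ = x₁ + x₂` of the horizontal edge at `x`. -/
def column (x : Pos L) : ZMod L := x.1 + x.2

lemma column_black (e : Edge L) :
    column (e.1 + dvec L e.2) = column e.1 + if e.2 = 0 then 0 else 1 := by
  obtain ⟨x, d⟩ := e
  fin_cases d <;> simp [column, dvec] <;> ring

section Columns

variable [NeZero L] {σ : Config L}

open Finset

lemma card_column_add_one (c : ZMod L) :
    #{x : Pos L | column x = c + 1} = #{x : Pos L | column x = c} := by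
  refine card_bij' (fun x _ => x - (1, 0)) (fun x _ => x + (1, 0)) (fun x hx => ?_)
    (fun x hx => ?_) (fun x _ => by simp) (fun x _ => by simp) <;>
  rw [mem_filter_univ] at hx ⊢ <;> simp only [column] at hx ⊢ <;>
  simp <;> linear_combination hx

lemma IsPM.card_white_column (h : IsPM L σ) (c : ZMod L) :
    #{e ∈ σ | column e.1 = c} = #{x : Pos L | column x = c} := by
  refine card_bij (fun e _ => e.1) (by simp +contextual) ?_ ?_
  · rintro ⟨x, d⟩ hd ⟨x', d'⟩ hd' (rfl : x = x')
    simp only [mem_filter] at hd hd'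
    rw [h.isWhitePM.eq hd.1 hd'.1]
  · intro x hx
    obtain ⟨d, hd, -⟩ := h.1 x
    exact ⟨(x, d), by simpa [hd] using hx, rfl⟩

lemma IsPM.card_black_column (h : IsPM L σ) (c : ZMod L) :
    #{e ∈ σ | column (e.1 + dvec L e.2) = c} = #{x : Pos L | column x = c} := by
  refine card_bij (fun e _ => e.1 + dvec L e.2) (by simp +contextual) ?_ ?_
  · intro e he e' he' heq
    simp only [mem_filter] at he he'
    exact (h.2 _).unique ⟨he.1, heq⟩ ⟨he'.1, rfl⟩
  · intro y hy
    obtain ⟨e, ⟨he, rfl⟩, -⟩ := h.2 y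
    exact ⟨e, by simpa [he] using hy, rfl⟩

/-- All columns carry the same number of beads: the whites of column `c` and the blacks of
column `c + 1` are equally many, and both are matched by the same non-horizontal dimers. -/
lemma IsPM.card_beads_column_add_one (h : IsPM L σ) (c : ZMod L) :
    #{e ∈ σ | e.2 = 0 ∧ column e.1 = c + 1} = #{e ∈ σ | e.2 = 0 ∧ column e.1 = c} := by
  have hwhite : #{e ∈ σ | column e.1 = c} =
      #{e ∈ σ | e.2 = 0 ∧ column e.1 = c} + #{e ∈ σ | e.2 ≠ 0 ∧ column e.1 = c} := by
    simp only [card_filter, ← sum_add_distrib]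
    refine sum_congr rfl fun e _ => ?_
    by_cases he : e.2 = 0 <;> simp [he]
  have hblack : #{e ∈ σ | column (e.1 + dvec L e.2) = c + 1} =
      #{e ∈ σ | e.2 = 0 ∧ column e.1 = c + 1} + #{e ∈ σ | e.2 ≠ 0 ∧ column e.1 = c} := by
    simp only [card_filter, ← sum_add_distrib]
    refine sum_congr rfl fun e _ => ?_
    rw [column_black]
    by_cases he : e.2 = 0 <;> simp [he]
  have := h.card_white_column c
  have := h.card_black_column (c + 1)
  have := card_column_add_one c
  omega

lemma IsPM.card_beads_column_eq (h : IsPM L σ) (c c' : ZMod L) :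
    #{e ∈ σ | e.2 = 0 ∧ column e.1 = c'} = #{e ∈ σ | e.2 = 0 ∧ column e.1 = c} := by
  have step : ∀ m : ℕ, #{e ∈ σ | e.2 = 0 ∧ column e.1 = c + (m : ZMod L)} =
      #{e ∈ σ | e.2 = 0 ∧ column e.1 = c} := by
    intro m
    induction m with
    | zero => simp
    | succ m ih => rw [Nat.cast_succ, ← add_assoc, h.card_beads_column_add_one, ih]
  simpa using step (c' - c).val

lemma IsPM.exists_bead_below (h : IsPM L σ) {x₀ : Pos L} (hx₀ : (x₀, 0) ∈ σ) (y : Pos L) :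
    ∃ j < L, (y - j • u L, 0) ∈ σ := by
  obtain ⟨⟨w, d⟩, hw⟩ : {e ∈ σ | e.2 = 0 ∧ column e.1 = column y}.Nonempty := by
    rw [← card_pos, h.card_beads_column_eq (column x₀)]
    exact card_pos.mpr ⟨(x₀, 0), by simp [hx₀]⟩
  simp only [mem_filter] at hw
  obtain ⟨hw, rfl, hcol⟩ := hw
  refine ⟨(y.1 - w.1).val, ZMod.val_lt _, ?_⟩
  convert hw
  simp only [nsmul_u, ZMod.natCast_val, ZMod.cast_id', id, column] at hcol ⊢
  ext <;> simp
  linear_combination -hcol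

end Columns

section GateCount

open Finset

lemma card_filter_sub_mem_and_not_mem {G : Type*} [AddGroup G] [Fintype G] [DecidableEq G]
    (s : Finset G) (g : G) : #{y | y - g ∈ s ∧ y ∉ s} = #{y | y ∈ s ∧ y - g ∉ s} := by
  have hcard : #(s.image (· + g)) = #s := card_image_of_injective _ (add_left_injective g)
  convert card_sdiff_comm hcard using 2 <;> ext y <;> simp [and_comm, sub_eq_add_neg]

open scoped Classical

variable [NeZero L] {σ : Config L}

lemma card_upGate_reflect (h : IsPM L σ) :
    #{y | UpGate (reflect σ) y} = #{y | UpGate σ y} := by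
  have hrefl : #{y | UpGate (reflect σ) y} = #{y | (y, 1) ∈ σ ∧ (y - (1, 0), 1) ∉ σ} := by
    refine card_nbij' (fun y => -y) (fun y => -y) ?_ ?_ (fun y _ => neg_neg y)
      (fun y _ => neg_neg y) <;> intro y <;>
      simp [h.reflect.upGate_iff, mem_reflect, reflectEdge, dvec, sub_eq_add_neg, add_comm,
        add_assoc, Prod.mk_zero_zero]
  rw [hrefl]
  simpa [h.upGate_iff, and_comm] using
    (card_filter_sub_mem_and_not_mem {y | (y, 1) ∈ σ} ((1 : ZMod L), (0 : ZMod L))).symm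

lemma IsPM.exists_upJump_to (h : IsPM L σ) {x₀ : Pos L} (hx₀ : (x₀, 0) ∈ σ) {y : Pos L}
    (hy : UpGate σ y) : ∃ n, 0 < n ∧ (y - n • u L, 0) ∈ σ ∧ ∀ j < n, UpGate σ (y - j • u L) := by
  have hex : ∃ j : ℕ, ¬ UpGate σ (y - j • u L) := by
    obtain ⟨j, -, hj⟩ := h.exists_bead_below hx₀ y
    exact ⟨j, fun hg => hg.not_bead h.isWhitePM hj⟩
  have hn : 0 < Nat.find hex := (Nat.find_pos hex).mpr (by simpa using hy)
  set n := Nat.find hex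
  refine ⟨n, hn, ?_, fun j hj => not_not.mp (Nat.find_min hex hj)⟩
  have hprev : UpGate σ (y - (n - 1) • u L) := not_not.mp (Nat.find_min hex (by omega))
  have hpos : y - (n - 1) • u L - u L = y - n • u L := by
    rw [sub_sub, ← succ_nsmul, Nat.sub_add_cancel hn]
  rw [← hpos]
  exact (h.bead_or_upGate_sub_u hprev).resolve_right (hpos ▸ Nat.find_spec hex)

/-- The up-jumps available in `σ`, as pairs (initial position of the bead, number of steps). -/
noncomputable def upJumps (σ : Config L) : Finset (Pos L × ℕ) :=
  {ℓ ∈ univ ×ˢ Icc 1 (L - 1) | ∃ τ, UpPathN L σ ℓ.1 ℓ.2 τ}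

noncomputable def downJumps (σ : Config L) : Finset (Pos L × ℕ) :=
  {ℓ ∈ univ ×ˢ Icc 1 (L - 1) | ∃ τ, DownPathN L σ ℓ.1 ℓ.2 τ}

lemma card_downJumps : #(downJumps σ) = #(upJumps (reflect σ)) := by
  refine card_bij' (fun ℓ _ => (-ℓ.1, ℓ.2)) (fun ℓ _ => (-ℓ.1, ℓ.2)) ?_ ?_ (by simp) (by simp) <;>
    rintro ⟨x, n⟩ <;> simp only [downJumps, upJumps, mem_filter] <;>
    rintro ⟨hℓ, τ, hτ⟩ <;> refine ⟨by simpa using hℓ, reflect τ, ?_⟩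
  · exact hτ.reflect
  · simpa [reflect_reflect] using hτ.reflect

variable [Fact (1 < L)]

lemma mem_upJumps (hσ : IsWhitePM σ) {x : Pos L} {n : ℕ} :
    (x, n) ∈ upJumps σ ↔ 0 < n ∧ (x, 0) ∈ σ ∧ ∀ k, 1 ≤ k → k ≤ n → UpGate σ (x + k • u L) := by
  simp only [upJumps, mem_filter, mem_product, mem_univ, mem_Icc, true_and]
  constructor
  · rintro ⟨⟨hn, -⟩, τ, hτ⟩
    exact ⟨hn, hτ.bead hn, hτ.upGate hσ⟩
  · rintro ⟨hn, hx, hgate⟩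
    obtain ⟨τ, hτ⟩ := exists_upPathN hσ hx hgate
    exact ⟨⟨hn, Nat.le_sub_one_of_lt (hτ.length_lt hσ)⟩, τ, hτ⟩

lemma card_upJumps (h : IsPM L σ) {x₀ : Pos L} (hx₀ : (x₀, 0) ∈ σ) :
    #(upJumps σ) = #{y | UpGate σ y} := by
  have hσ := h.isWhitePM
  refine card_bij (fun ℓ _ => ℓ.1 + ℓ.2 • u L) (fun ⟨x, n⟩ hℓ => ?_) ?_ ?_
  · obtain ⟨hn, -, hgate⟩ := (mem_upJumps hσ).mp hℓ
    simpa using hgate n hn le_rfl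
  · -- two jumps to the same gate: the longer one would pass the bead of the shorter one
    have key : ∀ {x x' : Pos L} {n n' : ℕ}, (x, n) ∈ upJumps σ → (x', n') ∈ upJumps σ →
        x + n • u L = x' + n' • u L → ¬ n < n' := by
      intro x x' n n' hℓ hℓ' heq hlt
      obtain ⟨hn, hx, -⟩ := (mem_upJumps hσ).mp hℓ
      obtain ⟨-, -, hgate'⟩ := (mem_upJumps hσ).mp hℓ'
      have hpos : x' + (n' - n) • u L = x := by
        rw [← add_right_cancel_iff (a := n • u L), add_assoc, ← add_nsmul,
          Nat.sub_add_cancel hlt.le, heq]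
      exact (hgate' (n' - n) (by omega) (by omega)).not_bead hσ (hpos ▸ hx)
    rintro ⟨x, n⟩ hℓ ⟨x', n'⟩ hℓ' heq
    obtain rfl : n = n' := by
      have := key hℓ hℓ' heq
      have := key hℓ' hℓ heq.symm
      omega
    simpa using heq
  · intro y hy
    obtain ⟨n, hn, hbead, hgate⟩ := h.exists_upJump_to hx₀ (mem_filter_univ y |>.mp hy)
    refine ⟨(y - n • u L, n), (mem_upJumps hσ).mpr ⟨hn, hbead, fun k hk hk' => ?_⟩, by simp⟩
    convert hgate (n - k) (by omega) using 2
    obtain ⟨m, rfl⟩ : ∃ m, n = m + k := ⟨n - k, by omega⟩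
    rw [Nat.add_sub_cancel, add_nsmul]
    abel

lemma card_upJumps_eq_card_downJumps (h : IsPM L σ) {x₀ : Pos L} (hx₀ : (x₀, 0) ∈ σ) :
    #(upJumps σ) = #(downJumps σ) := by
  rw [card_downJumps, card_upJumps h hx₀, card_upJumps h.reflect (x₀ := -x₀)
    (bead_mem_reflect.mpr (by rwa [neg_neg])), card_upGate_reflect h]

end GateCount

/-- A transition of the tagged process moving the bead at `x` up by `n` steps: when that bead
is the tagged one at `x₀`, the result is translated back by `τ^{-n}`. -/
def TaggedUp (x₀ x : Pos L) (n : ℕ) (σ τ : Config L) : Prop :=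
  ∃ σ', UpPathN L σ x n σ' ∧ τ = if x = x₀ then tshift L (-n) σ' else σ'

def TaggedDown (x₀ x : Pos L) (n : ℕ) (σ τ : Config L) : Prop :=
  ∃ σ', DownPathN L σ x n σ' ∧ τ = if x = x₀ then tshift L n σ' else σ'

section Tagged

variable {x₀ x : Pos L} {n : ℕ} {σ τ : Config L}

lemma IsWhitePM.tshift (h : IsWhitePM σ) (k : ℤ) : IsWhitePM (tshift L k σ) := fun z => by
  simpa only [mem_tshift] using h (z - k • u L)

lemma TaggedUp.unique {τ' : Config L} (h : TaggedUp x₀ x n σ τ) (h' : TaggedUp x₀ x n σ τ') :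
    τ = τ' := by
  obtain ⟨σ₁, hp, rfl⟩ := h
  obtain ⟨σ₂, hp', rfl⟩ := h'
  rw [hp.unique hp']

lemma TaggedDown.unique {τ' : Config L} (h : TaggedDown x₀ x n σ τ)
    (h' : TaggedDown x₀ x n σ τ') : τ = τ' := by
  obtain ⟨σ₁, hp, rfl⟩ := h
  obtain ⟨σ₂, hp', rfl⟩ := h'
  rw [hp.unique hp']

lemma TaggedDown.reflect (h : TaggedDown x₀ x n σ τ) :
    TaggedUp (-x₀) (-x) n (reflect σ) (reflect τ) := by
  obtain ⟨σ', hp, rfl⟩ := h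
  refine ⟨reflect σ', hp.reflect, ?_⟩
  simp only [neg_inj]
  split_ifs <;> simp [reflect_tshift]

variable [Fact (1 < L)]

lemma TaggedUp.ne_self (h : TaggedUp x₀ x n σ τ) (hσ : IsWhitePM σ) (hn : 0 < n) : τ ≠ σ := by
  obtain ⟨σ', hp, rfl⟩ := h
  split_ifs
  · intro heq
    exact hp.ne_tshift hσ hn (by rw [← heq, tshift_tshift_neg])
  · exact hp.ne_self hσ hn

lemma TaggedUp.bead (h : TaggedUp x₀ x n σ τ) (hσ : IsWhitePM σ) (hx₀ : (x₀, 0) ∈ σ) :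
    (x₀, 0) ∈ τ := by
  obtain ⟨σ', hp, rfl⟩ := h
  split_ifs with hx
  · subst hx
    simpa [mem_tshift] using hp.bead_target hx₀
  · exact hp.bead_mem_of_ne hσ hx₀ (Ne.symm hx)

lemma TaggedDown.bead (h : TaggedDown x₀ x n σ τ) (hσ : IsPM L σ) (hx₀ : (x₀, 0) ∈ σ) :
    (x₀, 0) ∈ τ := by
  obtain ⟨σ', hp, rfl⟩ := h
  split_ifs with hx
  · subst hx
    simpa [mem_tshift] using hp.bead_target hx₀
  · exact hp.bead_mem_of_ne hσ hx₀ (Ne.symm hx)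

lemma TaggedUp.reverse (h : TaggedUp x₀ x n σ τ) (hσ : IsWhitePM σ) (hx₀ : (x₀, 0) ∈ σ)
    (hn : 0 < n) : TaggedDown x₀ (if x = x₀ then x₀ else x + n • u L) n τ σ := by
  obtain ⟨σ', hp, rfl⟩ := h
  by_cases hx : x = x₀
  · subst hx
    refine ⟨tshift L (-n) σ, ?_, by simp [tshift_tshift_neg]⟩
    simpa using (hp.tshift (-n)).reverse (hσ.tshift _)
  · rw [if_neg hx, if_neg hx]
    exact ⟨σ, hp.reverse hσ, by rw [if_neg (hp.target_ne_bead hσ hn hx₀)]⟩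

lemma TaggedDown.reverse (h : TaggedDown x₀ x n σ τ) (hσ : IsPM L σ) (hx₀ : (x₀, 0) ∈ σ)
    (hn : 0 < n) : TaggedUp x₀ (if x = x₀ then x₀ else x - n • u L) n τ σ := by
  obtain ⟨σ', hp, rfl⟩ := h
  by_cases hx : x = x₀
  · subst hx
    refine ⟨tshift L n σ, ?_, by simp [tshift_neg_tshift]⟩
    simpa using (hp.reverse hσ).tshift n
  · rw [if_neg hx, if_neg hx]
    exact ⟨σ, hp.reverse hσ, by rw [if_neg (hp.target_ne_bead hσ hn hx₀)]⟩

lemma TaggedUp.eq_of_reverse {x' : Pos L} {σ' : Config L} (h : TaggedUp x₀ x n σ τ)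
    (h' : TaggedUp x₀ x' n σ' τ) (hσ : IsWhitePM σ) (hσ' : IsWhitePM σ') (hx₀ : (x₀, 0) ∈ σ)
    (hx₀' : (x₀, 0) ∈ σ') (hn : 0 < n)
    (heq : (if x = x₀ then x₀ else x + n • u L) = if x' = x₀ then x₀ else x' + n • u L) :
    σ = σ' ∧ x = x' := by
  refine ⟨(h.reverse hσ hx₀ hn).unique (by rw [heq]; exact h'.reverse hσ' hx₀' hn), ?_⟩
  have hne : ∀ {ρ y}, TaggedUp x₀ y n ρ τ → IsWhitePM ρ → (x₀, 0) ∈ ρ → y ≠ x₀ →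
      y + n • u L ≠ x₀ := fun ⟨_, hp, _⟩ hρ hb _ => hp.target_ne_bead hρ hn hb
  by_cases hx : x = x₀ <;> by_cases hx' : x' = x₀ <;>
    simp only [hx, hx', if_true, if_false] at heq
  · rw [hx, hx']
  · exact absurd heq.symm (hne h' hσ' hx₀' hx')
  · exact absurd heq (hne h hσ hx₀ hx)
  · exact add_right_cancel heq

end Tagged

section Counting

open Finset
open scoped Classical Pointwise

lemma sum_card_filter_eq_card_filter_exists {α β : Type*} (s : Finset α) (t : Finset β)
    (r : α → β → Prop) (hr : ∀ a b b', r a b → r a b' → b = b') :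
    ∑ b ∈ t, #{a ∈ s | r a b} = #{a ∈ s | ∃ b ∈ t, r a b} := by
  rw [← card_biUnion fun b _ b' _ hne =>
    disjoint_filter.mpr fun a _ hb hb' => hne (hr a b b' hb hb')]
  congr 1
  ext a
  simp only [mem_biUnion, mem_filter]
  tauto

variable {x₀ : Pos L} {σ τ : Config L}

lemma numDownHat_eq_numUpHat_reflect :
    numDownHat L x₀ σ τ = numUpHat L (-x₀) (reflect σ) (reflect τ) := by
  have hpath : ∀ {y : Pos L} {m : ℕ} {τ' : Config L},
      UpPathN L (reflect σ) (-y) m (reflect τ') ↔ DownPathN L σ y m τ' :=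
    ⟨fun h => by simpa [reflect_reflect] using h.reflect, fun h => h.reflect⟩
  have htagged : ∀ m : ℕ, (∃ σ', UpPathN L (reflect σ) (-x₀) m σ' ∧
      reflect τ = tshift L (-(m : ℤ)) σ') ↔ ∃ σ', DownPathN L σ x₀ m σ' ∧ τ = tshift L m σ' := by
    refine fun m => ⟨fun ⟨σ', h, e⟩ => ⟨reflect σ', ?_, ?_⟩, fun ⟨σ', h, e⟩ =>
      ⟨reflect σ', h.reflect, by rw [e, reflect_tshift]⟩⟩
    · rw [← reflect_reflect σ'] at h
      exact hpath.mp h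
    · rw [← reflect_reflect τ, e, reflect_tshift, neg_neg]
  unfold numDownHat numUpHat
  conv_rhs => rw [← Set.ncard_neg]
  congr 1
  ext ⟨a, b⟩
  rw [Set.mem_neg]
  simp only [Set.mem_ofPred_eq, Prod.fst_neg, Prod.snd_neg, ne_eq, htagged, hpath,
    neg_add_eq_sub, neg_eq_iff_eq_neg, neg_sub, neg_neg]

lemma sum_hatGen [NeZero L] {S : Finset (Config L)} (hσ : σ ∈ S) (p q : ℝ) :
    ∑ σ' ∈ S, HatGen L x₀ p q σ' σ =
      p * ((∑ σ' ∈ S.erase σ, numUpHat L x₀ σ' σ : ℕ) -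
        (∑ τ ∈ univ.erase σ, numUpHat L x₀ σ τ : ℕ)) +
      q * ((∑ σ' ∈ S.erase σ, numDownHat L x₀ σ' σ : ℕ) -
        (∑ τ ∈ univ.erase σ, numDownHat L x₀ σ τ : ℕ)) := by
  rw [← add_sum_erase _ _ hσ, sum_congr rfl fun σ' hσ' =>
    (show HatGen L x₀ p q σ' σ = _ from if_neg (ne_of_mem_erase hσ').symm), HatGen, if_pos rfl]
  push_cast
  simp only [sum_add_distrib, ← mul_sum]
  ring

variable [NeZero L] [Fact (1 < L)]

lemma numUpHat_eq_card (hσ : IsWhitePM σ) :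
    numUpHat L x₀ σ τ =
      #{ℓ ∈ (univ : Finset (Pos L)) ×ˢ Icc 1 (L - 1) | TaggedUp x₀ ℓ.1 ℓ.2 σ τ} := by
  -- the pair (source, target) of a jump is determined by (source, length), and conversely
  set F := {ℓ ∈ (univ : Finset (Pos L)) ×ˢ Icc 1 (L - 1) | TaggedUp x₀ ℓ.1 ℓ.2 σ τ}
  have hset : {pr : Pos L × Pos L | pr.2 ≠ pr.1 ∧
      ((pr.1 ≠ x₀ ∧ ∃ n : ℕ, pr.2 = pr.1 + n • u L ∧ UpPathN L σ pr.1 n τ) ∨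
       (pr.1 = x₀ ∧ ∃ n : ℕ, 0 < n ∧ pr.2 = x₀ + n • u L ∧
          ∃ σ' : Config L, UpPathN L σ x₀ n σ' ∧ τ = tshift L (-(n : ℤ)) σ'))} =
      ↑(F.image fun ℓ => (ℓ.1, ℓ.1 + ℓ.2 • u L)) := by
    ext ⟨a, b⟩
    simp only [Set.mem_ofPred_eq, coe_image, coe_filter, Set.mem_image, mem_product, mem_univ,
      mem_Icc, true_and, F]
    constructor
    · rintro ⟨hne, ⟨ha, n, rfl, hp⟩ | ⟨rfl, n, hn, rfl, σ', hp, rfl⟩⟩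
      · have hn : 0 < n := Nat.pos_of_ne_zero fun h0 => hne (by simp [h0])
        exact ⟨(a, n), ⟨⟨hn, Nat.le_sub_one_of_lt (hp.length_lt hσ)⟩, τ, hp, by simp [ha]⟩, rfl⟩
      · exact ⟨(a, n), ⟨⟨hn, Nat.le_sub_one_of_lt (hp.length_lt hσ)⟩, σ', hp, by simp⟩, rfl⟩
    · rintro ⟨⟨a, n⟩, ⟨⟨hn, hnL⟩, σ', hp, rfl⟩, ⟨⟩⟩
      dsimp only at hn hnL hp ⊢
      refine ⟨fun h => nsmul_u_ne_zero hn (by omega : n < L) (by simpa using h), ?_⟩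
      by_cases ha : a = x₀
      · exact Or.inr ⟨ha, n, hn, by rw [ha], σ', ha ▸ hp, by simp [ha]⟩
      · exact Or.inl ⟨ha, n, rfl, by simpa [ha] using hp⟩
  unfold numUpHat
  rw [hset, Set.ncard_coe_finset, card_image_of_injOn]
  rintro ⟨a, n⟩ hℓ ⟨a', n'⟩ hℓ' heq
  simp only [coe_filter, mem_product, mem_univ, mem_Icc, true_and, Set.mem_ofPred_eq, F] at hℓ hℓ'
  simp only [Prod.mk.injEq] at heq ⊢
  obtain ⟨rfl, heq⟩ := heq
  exact ⟨rfl, nsmul_u_inj (by omega) (by omega) (add_left_cancel heq)⟩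

lemma sum_numUpHat_out (hσ : IsWhitePM σ) :
    ∑ τ ∈ univ.erase σ, numUpHat L x₀ σ τ = #(upJumps σ) := by
  rw [sum_congr rfl fun τ _ => numUpHat_eq_card hσ, sum_card_filter_eq_card_filter_exists _ _
    (fun (ℓ : Pos L × ℕ) τ => TaggedUp x₀ ℓ.1 ℓ.2 σ τ) fun _ _ _ h h' => h.unique h']
  refine congrArg card (filter_congr fun ℓ hℓ => ?_)
  have hn : 0 < ℓ.2 := (mem_Icc.mp (mem_product.mp hℓ).2).1
  exact ⟨fun ⟨τ, _, σ', hp, _⟩ => ⟨σ', hp⟩, fun ⟨σ', hp⟩ => ⟨_, mem_erase.mpr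
    ⟨TaggedUp.ne_self ⟨σ', hp, rfl⟩ hσ hn, mem_univ _⟩, σ', hp, rfl⟩⟩

lemma sum_numDownHat_out (hσ : IsPM L σ) :
    ∑ τ ∈ univ.erase σ, numDownHat L x₀ σ τ = #(downJumps σ) := by
  rw [card_downJumps, ← sum_numUpHat_out (x₀ := -x₀) hσ.reflect.isWhitePM]
  refine sum_nbij' reflect reflect ?_ ?_ (fun τ _ => reflect_reflect τ)
    (fun τ _ => reflect_reflect τ) fun τ _ => numDownHat_eq_numUpHat_reflect <;>
    intro τ hτ <;> simp only [mem_erase, mem_univ, and_true] at hτ ⊢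
  · exact reflect_injective.ne hτ
  · rintro rfl
    exact hτ (reflect_reflect τ).symm

/-- The up-transitions into `σ` are the reversals of the down-transitions out of `σ`. -/
lemma sum_numUpHat_in {S : Finset (Config L)} (hS : ∀ σ' ∈ S, IsPM L σ' ∧ (x₀, 0) ∈ σ')
    (hσ : IsPM L σ) (hx₀ : (x₀, 0) ∈ σ) (hclosed : ∀ x n τ, TaggedDown x₀ x n σ τ → τ ∈ S) :
    ∑ σ' ∈ S.erase σ, numUpHat L x₀ σ' σ = #(downJumps σ) := by
  have hS' : ∀ σ' ∈ S.erase σ, IsWhitePM σ' ∧ (x₀, 0) ∈ σ' := fun σ' hσ' =>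
    ⟨(hS σ' (mem_of_mem_erase hσ')).1.isWhitePM, (hS σ' (mem_of_mem_erase hσ')).2⟩
  rw [sum_congr rfl fun σ' hσ' => numUpHat_eq_card (hS' σ' hσ').1, ← card_sigma]
  refine card_bij (fun p _ => (if p.2.1 = x₀ then x₀ else p.2.1 + p.2.2 • u L, p.2.2))
    (fun ⟨σ', x, n⟩ hp => ?_) (fun ⟨σ₁, x₁, n₁⟩ hp₁ ⟨σ₂, x₂, n₂⟩ hp₂ heq => ?_) fun ⟨y, n⟩ hy => ?_
  · simp only [mem_sigma, mem_filter, mem_product, mem_univ, mem_Icc, true_and] at hp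
    obtain ⟨hσ', ⟨hn, hnL⟩, hT⟩ := hp
    obtain ⟨τ, hτ, -⟩ := hT.reverse (hS' σ' hσ').1 (hS' σ' hσ').2 hn
    simp only [downJumps, mem_filter, mem_product, mem_univ, mem_Icc, true_and]
    exact ⟨⟨hn, hnL⟩, τ, hτ⟩
  · simp only [mem_sigma, mem_filter, mem_product, mem_univ, mem_Icc, true_and] at hp₁ hp₂
    obtain ⟨hσ₁, ⟨hn, -⟩, hT₁⟩ := hp₁
    obtain ⟨hσ₂, -, hT₂⟩ := hp₂
    obtain ⟨hx, rfl⟩ := Prod.mk.inj heq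
    obtain ⟨rfl, rfl⟩ := hT₁.eq_of_reverse hT₂ (hS' σ₁ hσ₁).1 (hS' σ₂ hσ₂).1 (hS' σ₁ hσ₁).2
      (hS' σ₂ hσ₂).2 hn hx
    rfl
  · simp only [downJumps, mem_filter, mem_product, mem_univ, mem_Icc, true_and] at hy
    obtain ⟨⟨hn, hnL⟩, τ, hτ⟩ := hy
    have hT : TaggedDown x₀ y n σ (if y = x₀ then tshift L n τ else τ) := ⟨τ, hτ, rfl⟩
    have hU := hT.reverse hσ hx₀ hn
    have hmem := hclosed _ _ _ hT
    refine ⟨⟨if y = x₀ then tshift L n τ else τ, if y = x₀ then x₀ else y - n • u L, n⟩, ?_, ?_⟩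
    · simp only [mem_sigma, mem_filter, mem_product, mem_univ, mem_Icc, true_and, mem_erase]
      exact ⟨⟨(hU.ne_self (hS _ hmem).1.isWhitePM hn).symm, hmem⟩, ⟨hn, hnL⟩, hU⟩
    · by_cases hy : y = x₀
      · simp [hy]
      · simp only [if_neg hy, if_neg (hτ.target_ne_bead hσ hn hx₀), sub_add_cancel]

lemma sum_numDownHat_in {S : Finset (Config L)} (hS : ∀ σ' ∈ S, IsPM L σ' ∧ (x₀, 0) ∈ σ')
    (hσ : IsPM L σ) (hx₀ : (x₀, 0) ∈ σ) (hclosed : ∀ x n τ, TaggedUp x₀ x n σ τ → τ ∈ S) :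
    ∑ σ' ∈ S.erase σ, numDownHat L x₀ σ' σ = #(upJumps σ) := by
  have hS' : ∀ σ' ∈ S.image reflect, IsPM L σ' ∧ (-x₀, 0) ∈ σ' := by
    simp only [mem_image]
    rintro _ ⟨σ', hσ', rfl⟩
    exact ⟨(hS σ' hσ').1.reflect, bead_mem_reflect.mpr (by simpa using (hS σ' hσ').2)⟩
  have hclosed' : ∀ x n τ, TaggedDown (-x₀) x n (reflect σ) τ → τ ∈ S.image reflect := by
    intro x n τ h
    have := hclosed _ _ _ (by simpa [reflect_reflect] using h.reflect)
    exact mem_image.mpr ⟨_, this, reflect_reflect τ⟩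
  rw [← reflect_reflect σ, ← card_downJumps, ← sum_numUpHat_in hS' hσ.reflect
    (bead_mem_reflect.mpr (by simpa using hx₀)) hclosed', reflect_reflect]
  refine sum_nbij' reflect reflect ?_ ?_ (fun τ _ => reflect_reflect τ)
    (fun τ _ => reflect_reflect τ) fun τ _ => numDownHat_eq_numUpHat_reflect <;>
    intro τ hτ <;> simp only [mem_erase, mem_image] at hτ ⊢
  · exact ⟨reflect_injective.ne hτ.1, τ, hτ.2, rfl⟩
  · obtain ⟨hne, τ', hτ', rfl⟩ := hτ
    rw [reflect_reflect]
    exact ⟨fun h => hne (h ▸ rfl), hτ'⟩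

end Counting

section Closure

open Finset

variable {x₀ x : Pos L} {n : ℕ} {σ τ : Config L}

lemma forall_tshift_mem [NeZero L] {N : Finset (Config L)} (hN : ∀ σ ∈ N, tshift L 1 σ ∈ N) :
    ∀ σ ∈ N, ∀ k : ℤ, tshift L k σ ∈ N := by
  intro σ hσ k
  have hnat : ∀ m : ℕ, tshift L m σ ∈ N := by
    intro m
    induction m with
    | zero => simpa [tshift_zero] using hσ
    | succ m ih => simpa [tshift_tshift, add_comm] using hN _ ih
  -- `τ^L` is the identity, so `τ^k = τ^(k mod L)`
  convert hnat (k % L).toNat using 1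
  ext ⟨z, d⟩
  have hk : k • u L = ((k % L).toNat : ℤ) • u L := by
    rw [Int.toNat_of_nonneg (Int.emod_nonneg _ (by exact_mod_cast NeZero.ne L))]
    conv_lhs => rw [← Int.emod_add_mul_ediv k L]
    rw [add_zsmul, mul_comm, mul_zsmul, natCast_zsmul, card_nsmul_u, zsmul_zero, add_zero]
  rw [mem_tshift, mem_tshift, hk]

variable [Fact (1 < L)]

lemma TaggedUp.mem_of_closed {N : Finset (Config L)}
    (hNup : ∀ σ ∈ N, ∀ τ, IsUpJump L σ τ → τ ∈ N) (hNshift : ∀ σ ∈ N, ∀ k : ℤ, tshift L k σ ∈ N)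
    (hσN : σ ∈ N) (hσ : IsWhitePM σ) (h : TaggedUp x₀ x n σ τ) : τ ∈ N := by
  obtain ⟨σ', hp, rfl⟩ := h
  have hσ' : σ' ∈ N := by
    rcases Nat.eq_zero_or_pos n with rfl | hn
    · rwa [hp.unique (.refl _ _)]
    · exact hNup σ hσN σ' (hp.isUpJump hn (hp.length_lt hσ))
  split_ifs
  exacts [hNshift _ hσ' _, hσ']

lemma TaggedDown.mem_of_closed {N : Finset (Config L)}
    (hNdown : ∀ σ ∈ N, ∀ τ, IsDownJump L σ τ → τ ∈ N)
    (hNshift : ∀ σ ∈ N, ∀ k : ℤ, tshift L k σ ∈ N)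
    (hσN : σ ∈ N) (hσ : IsPM L σ) (h : TaggedDown x₀ x n σ τ) : τ ∈ N := by
  obtain ⟨σ', hp, rfl⟩ := h
  have hσ' : σ' ∈ N := by
    rcases Nat.eq_zero_or_pos n with rfl | hn
    · rwa [hp.unique (.refl _ _)]
    · exact hNdown σ hσN σ' (hp.isDownJump hn (hp.length_lt hσ))
  split_ifs
  exacts [hNshift _ hσ' _, hσ']

end Closure

theorem uniform_stationary_tagged_general [NeZero L] (hL : 3 ≤ L)
    (p q : ℝ) (x₀ : Pos L)
    (N : Finset (Config L)) (hNpm : ∀ σ ∈ N, IsPM L σ)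
    (hNup : ∀ σ ∈ N, ∀ τ : Config L, IsUpJump L σ τ → τ ∈ N)
    (hNdown : ∀ σ ∈ N, ∀ τ : Config L, IsDownJump L σ τ → τ ∈ N)
    (hNshift : ∀ σ ∈ N, tshift L 1 σ ∈ N)
    (σ : Config L) (hσ : σ ∈ N.filter (fun σ => ((x₀, (0 : Fin 3)) ∈ σ))) :
    ∑ σ' ∈ N.filter (fun σ => ((x₀, (0 : Fin 3)) ∈ σ)),
        (((N.filter (fun σ => ((x₀, (0 : Fin 3)) ∈ σ))).card : ℝ))⁻¹ *
          HatGen L x₀ p q σ' σ = 0 := by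
  have : Fact (1 < L) := ⟨by omega⟩
  obtain ⟨hσN, hx₀⟩ := Finset.mem_filter.mp hσ
  have hσpm := hNpm σ hσN
  have hshift := forall_tshift_mem hNshift
  have hS : ∀ σ' ∈ N.filter (fun σ => ((x₀, (0 : Fin 3)) ∈ σ)), IsPM L σ' ∧ (x₀, 0) ∈ σ' :=
    fun σ' h => ⟨hNpm σ' (Finset.mem_filter.mp h).1, (Finset.mem_filter.mp h).2⟩
  have hup : ∀ x n τ, TaggedUp x₀ x n σ τ → τ ∈ N.filter (fun σ => ((x₀, (0 : Fin 3)) ∈ σ)) :=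
    fun x n τ h => Finset.mem_filter.mpr ⟨h.mem_of_closed hNup hshift hσN hσpm.isWhitePM,
      h.bead hσpm.isWhitePM hx₀⟩
  have hdown : ∀ x n τ, TaggedDown x₀ x n σ τ →
      τ ∈ N.filter (fun σ => ((x₀, (0 : Fin 3)) ∈ σ)) :=
    fun x n τ h => Finset.mem_filter.mpr ⟨h.mem_of_closed hNdown hshift hσN hσpm, h.bead hσpm hx₀⟩
  rw [← Finset.mul_sum, sum_hatGen hσ, sum_numUpHat_in hS hσpm hx₀ hdown,
    sum_numUpHat_out hσpm.isWhitePM, sum_numDownHat_in hS hσpm hx₀ hup, sum_numDownHat_out hσpm,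
    card_upJumps_eq_card_downJumps hσpm hx₀]
  ring

/-- Let `L ≥ 3`, `p, q ≥ 0`, fix a horizontal edge `x₀` of the hexagonal
torus `T_L`, and let `N` be a nonempty set of perfect matchings of `T_L` closed under
single-bead up-jumps, down-jumps and the vertical translation `τ`.  Let
`N̂ = {σ ∈ N : σ has a bead at x₀}`, assumed nonempty.  Then the uniform probability
measure `π̂` on `N̂` is stationary for the tagged-bead generator `𝓛̂`:
for every `σ ∈ N̂`, `∑_{σ' ∈ N̂} π̂(σ')·𝓛̂(σ',σ) = 0`. -/
theorem uniform_stationary_tagged [NeZero L] (hL : 3 ≤ L)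
    (p q : ℝ) (hp : 0 ≤ p) (hq : 0 ≤ q) (x₀ : Pos L)
    (N : Finset (Config L)) (hNpm : ∀ σ ∈ N, IsPM L σ)
    (hNup : ∀ σ ∈ N, ∀ τ : Config L, IsUpJump L σ τ → τ ∈ N)
    (hNdown : ∀ σ ∈ N, ∀ τ : Config L, IsDownJump L σ τ → τ ∈ N)
    (hNshift : ∀ σ ∈ N, tshift L 1 σ ∈ N)
    (hNhatne : (N.filter (fun σ => ((x₀, (0 : Fin 3)) ∈ σ))).Nonempty)
    (σ : Config L) (hσ : σ ∈ N.filter (fun σ => ((x₀, (0 : Fin 3)) ∈ σ))) :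
    ∑ σ' ∈ N.filter (fun σ => ((x₀, (0 : Fin 3)) ∈ σ)),
        (((N.filter (fun σ => ((x₀, (0 : Fin 3)) ∈ σ))).card : ℝ))⁻¹ *
          HatGen L x₀ p q σ' σ = 0 :=
  uniform_stationary_tagged_general hL p q x₀ N hNpm hNup hNdown hNshift σ hσ

end HexDimer
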